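/- Let (B, +, ∘) be a λ-homomorphic skew left brace (i.e., the map b ↦ λ_b is also a group homomorphism from (B, +) to Aut(B, +)). Then for every x ∈ B, the brace centralizer Cb_B(x) is closed under + and under additive inverses, hence is a sub-skew brace of B. -/
import Mathlib


/-- A skew left brace structure on a type carrying both an additive and a
multiplicative group structure: the compatibility (skew left distributivity)
`a ∘ (b + c) = (a ∘ b) - a + (a ∘ c)` holds, and the two identities coincide. -/
class SkewBrace (B : Type*) [AddGroup B] [Group B] : Prop where
  compat : ∀ a b c : B, a * (b + c) = a * b + -a + a * c
  zero_eq_one : (0 : B) = 1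

section Defs

variable {B : Type*} [AddGroup B] [Group B]

/-- `λ_a(b) = -a + (a ∘ b)`. -/
def lambdaMap (a b : B) : B := -a + a * b

/-- `a * b := -a + (a ∘ b) - b` (the star product of a skew brace). -/
def starOp (a b : B) : B := -a + a * b + -b

/-- The additive commutator `[a,b]⁺ = a + b - a - b`. -/
def addComB (a b : B) : B := a + b + -a + -b

/-- The multiplicative commutator `[a,b]∘ = a ∘ b ∘ a⁻¹ ∘ b⁻¹`. -/
def mulComB (a b : B) : B := a * b * a⁻¹ * b⁻¹

/-- The brace centralizer `Cb_B(x) = {b | x*b = b*x = [x,b]⁺ = 1}`. -/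
def Cb (x : B) : Set B := {b | starOp x b = 0 ∧ starOp b x = 0 ∧ addComB x b = 0}

/-- The annihilator `Ann(B) = Ker λ ∩ Z(B,+) ∩ Z(B,∘)` as a set. -/
def AnnSet (B : Type*) [AddGroup B] [Group B] : Set B :=
  {a | (∀ b : B, a + b = a * b) ∧ (∀ b : B, a + b = b + a) ∧ (∀ b : B, a * b = b * a)}

/-- A sub-skew brace: a subset closed under both group operations and inverses. -/
def IsSubSkewBrace (H : Set B) : Prop :=
  (0 : B) ∈ H ∧ (∀ a ∈ H, ∀ b ∈ H, a + b ∈ H) ∧ (∀ a ∈ H, -a ∈ H) ∧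
    (∀ a ∈ H, ∀ b ∈ H, a * b ∈ H) ∧ (∀ a ∈ H, a⁻¹ ∈ H)

/-- The commuting probability of a (finite) skew brace. -/
noncomputable def Pb (B : Type*) [AddGroup B] [Group B] : ℚ :=
  (Nat.card {p : B × B //
      starOp p.1 p.2 = 0 ∧ starOp p.2 p.1 = 0 ∧ addComB p.1 p.2 = 0} : ℚ)
    / (Nat.card B : ℚ) ^ 2

/-- The commuting probability of a sub-skew brace `H` of `B`. -/
noncomputable def PbSub (H : Set B) : ℚ :=
  (Nat.card {p : B × B // p.1 ∈ H ∧ p.2 ∈ H ∧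
      starOp p.1 p.2 = 0 ∧ starOp p.2 p.1 = 0 ∧ addComB p.1 p.2 = 0} : ℚ)
    / (Nat.card H : ℚ) ^ 2

end Defs


section AuxLemmas
variable {B : Type*} [AddGroup B] [Group B] [SkewBrace B]

lemma lam_add_hom (a u v : B) :
    lambdaMap a (u + v) = lambdaMap a u + lambdaMap a v := by
  simp [lambdaMap, SkewBrace.compat, add_assoc]

lemma lam_zero' (a : B) : lambdaMap a 0 = 0 := by
  simp [lambdaMap, SkewBrace.zero_eq_one]

lemma lam_zero_map (c : B) : lambdaMap 0 c = c := by
  rw [lambdaMap, show ((0 : B) * c) = c by rw [SkewBrace.zero_eq_one, one_mul], neg_zero, zero_add]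

lemma lam_neg (a u : B) : lambdaMap a (-u) = -lambdaMap a u := by
  have h := lam_add_hom a u (-u)
  rw [add_neg_cancel, lam_zero'] at h
  exact (neg_eq_of_add_eq_zero_right h.symm).symm

lemma lam_inj (a : B) : Function.Injective (lambdaMap a) := by
  intro u v h
  simpa only [lambdaMap, add_right_inj, mul_right_inj] using h

lemma lam_mul (a b c : B) : lambdaMap (a * b) c = lambdaMap a (lambdaMap b c) := by
  have h1 : a * ((b : B) + -b) = a * b + -a + a * (-b) := SkewBrace.compat a b (-b)
  rw [add_neg_cancel, show a * (0 : B) = a by rw [SkewBrace.zero_eq_one, mul_one]] at h1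
  have h2 : a * (-b) = -(a * b + -a) + a := eq_neg_add_iff_add_eq.mpr h1.symm
  rw [lambdaMap, lambdaMap, lambdaMap, SkewBrace.compat a (-b) (b * c), h2, ← mul_assoc]
  simp [add_assoc]

lemma mem_Cb_iff (x b : B) :
    b ∈ Cb x ↔ lambdaMap x b = b ∧ lambdaMap b x = x ∧ x + b = b + x := by
  constructor
  · rintro ⟨h1, h2, h3⟩
    refine ⟨?_, ?_, ?_⟩
    · have : lambdaMap x b + -b = 0 := h1
      exact add_neg_eq_zero.mp this
    · have : lambdaMap b x + -x = 0 := h2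
      exact add_neg_eq_zero.mp this
    · have : (x + b + -x) + -b = 0 := h3
      have h4 := add_neg_eq_zero.mp this
      have h5 := congrArg (· + x) h4
      simpa [add_assoc] using h5
  · rintro ⟨h1, h2, h3⟩
    refine ⟨?_, ?_, ?_⟩
    · show lambdaMap x b + -b = 0
      rw [h1, add_neg_cancel]
    · show lambdaMap b x + -x = 0
      rw [h2, add_neg_cancel]
    · show x + b + -x + -b = 0
      rw [h3]
      simp [add_assoc]

end AuxLemmas

/-- In a λ-homomorphic skew brace, every brace centralizer is closed under `+`
and additive inverses, hence is a sub-skew brace. -/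
theorem stmt2 {B : Type*} [AddGroup B] [Group B] [SkewBrace B]
    (hlam : ∀ a b c : B, lambdaMap (a + b) c = lambdaMap a (lambdaMap b c)) :
    ∀ x : B,
      (∀ a ∈ Cb x, ∀ b ∈ Cb x, a + b ∈ Cb x) ∧
      (∀ a ∈ Cb x, -a ∈ Cb x) ∧
      IsSubSkewBrace (Cb x) := by
  intro x
  have hmem : ∀ b : B, b ∈ Cb x ↔
      lambdaMap x b = b ∧ lambdaMap b x = x ∧ x + b = b + x := fun b => mem_Cb_iff x b
  have hswap : ∀ a : B, x + a = a + x →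
      ∀ c, lambdaMap x (lambdaMap a c) = lambdaMap a (lambdaMap x c) := by
    intro a hxa c
    rw [← hlam, ← hlam, hxa]
  have hadd : ∀ a ∈ Cb x, ∀ b ∈ Cb x, a + b ∈ Cb x := by
    intro a ha b hb
    rw [hmem] at ha hb ⊢
    obtain ⟨ha1, ha2, ha3⟩ := ha
    obtain ⟨hb1, hb2, hb3⟩ := hb
    refine ⟨?_, ?_, ?_⟩
    · rw [lam_add_hom, ha1, hb1]
    · rw [hlam, hb2, ha2]
    · exact (show AddCommute x a from ha3).add_right (show AddCommute x b from hb3)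
  have hneg : ∀ a ∈ Cb x, -a ∈ Cb x := by
    intro a ha
    rw [hmem] at ha ⊢
    obtain ⟨ha1, ha2, ha3⟩ := ha
    refine ⟨?_, ?_, ?_⟩
    · rw [lam_neg, ha1]
    · apply lam_inj a
      rw [← hlam, add_neg_cancel, lam_zero_map, ha2]
    · exact (show AddCommute x a from ha3).neg_right
  have hzero : (0 : B) ∈ Cb x := by
    rw [hmem]
    exact ⟨lam_zero' x, lam_zero_map x, by simp⟩
  have hmul : ∀ a ∈ Cb x, ∀ b ∈ Cb x, a * b ∈ Cb x := by
    intro a ha b hb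
    rw [hmem] at ha hb ⊢
    obtain ⟨ha1, ha2, ha3⟩ := ha
    obtain ⟨hb1, hb2, hb3⟩ := hb
    have hab : a * b = a + lambdaMap a b := by
      rw [lambdaMap, add_neg_cancel_left]
    have hcomm_lab : x + lambdaMap a b = lambdaMap a b + x := by
      have h := congrArg (lambdaMap a) hb3
      rw [lam_add_hom, lam_add_hom, ha2] at h
      exact h
    refine ⟨?_, ?_, ?_⟩
    · rw [hab, lam_add_hom, ha1, hswap a ha3, hb1]
    · rw [lam_mul, hb2, ha2]
    · rw [hab]
      exact (show AddCommute x a from ha3).add_right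
        (show AddCommute x (lambdaMap a b) from hcomm_lab)
  have hinv : ∀ a ∈ Cb x, a⁻¹ ∈ Cb x := by
    intro a ha
    rw [hmem] at ha ⊢
    obtain ⟨ha1, ha2, ha3⟩ := ha
    have hainv : lambdaMap a a⁻¹ = -a := by
      rw [lambdaMap, mul_inv_cancel, ← SkewBrace.zero_eq_one, add_zero]
    have hid : ∀ c : B, lambdaMap a⁻¹ (lambdaMap a c) = c := by
      intro c
      rw [← lam_mul, inv_mul_cancel, ← SkewBrace.zero_eq_one, lam_zero_map]
    have hix : lambdaMap a⁻¹ x = x := by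
      apply lam_inj a
      rw [← lam_mul, mul_inv_cancel, ← SkewBrace.zero_eq_one, lam_zero_map, ha2]
    have hinv_eq : a⁻¹ = -(lambdaMap a⁻¹ a) := by
      rw [← lam_neg, ← hainv, hid]
    refine ⟨?_, hix, ?_⟩
    · apply lam_inj a
      rw [← hswap a ha3 a⁻¹, hainv, lam_neg, ha1]
    · have hca : x + lambdaMap a⁻¹ a = lambdaMap a⁻¹ a + x := by
        have h := congrArg (lambdaMap a⁻¹) ha3
        rw [lam_add_hom, lam_add_hom, hix] at h
        exact h
      rw [hinv_eq]
      exact (show AddCommute x (lambdaMap a⁻¹ a) from hca).neg_right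
  exact ⟨hadd, hneg, hzero, hadd, hneg, hmul, hinv⟩
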